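/- arXiv:2001.02637 — 2 statements merged into one kernel-verified Lean document; each statement's English description precedes it below -/
import Mathlib

section
/- Every nontrivial finite group that is inverse semi-rational (a cut group) has order divisible by 2 or by 3. -/
def IsInvSemiRational {G : Type*} [Group G] (x : G) : Prop :=
  ∀ k : ℤ, IsCoprime k (orderOf x : ℤ) → IsConj x (x ^ k) ∨ IsConj x⁻¹ (x ^ k)

def IsCutGroup (G : Type*) [Group G] : Prop :=
  ∀ x : G, IsInvSemiRational x

section Aux

variable {G : Type*} [Group G]

lemma conj_pow_aux (g x : G) (n : ℕ) : g * x ^ n * g⁻¹ = (g * x * g⁻¹) ^ n := by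
  induction n with
  | zero => simp
  | succ n ih => rw [pow_succ, pow_succ, ← ih]; group

lemma pow_val_mul {x : G} {p : ℕ} (hx : orderOf x = p) (u v : (ZMod p)ˣ) :
    x ^ ((u * v : (ZMod p)ˣ) : ZMod p).val = x ^ ((u : ZMod p).val * (v : ZMod p).val) := by
  conv_rhs => rw [← pow_mod_orderOf]
  rw [hx, Units.val_mul, ZMod.val_mul]

lemma pow_val_unique {x : G} {p : ℕ} [Fact p.Prime] (hx : orderOf x = p) {u v : (ZMod p)ˣ}
    (h : x ^ ((u : ZMod p)).val = x ^ ((v : ZMod p)).val) : u = v := by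
  have hm := (pow_eq_pow_iff_modEq).mp h
  rw [hx] at hm
  have h1 : (u : ZMod p).val < p := ZMod.val_lt _
  have h2 : (v : ZMod p).val < p := ZMod.val_lt _
  have hv : (u : ZMod p).val = (v : ZMod p).val := by
    unfold Nat.ModEq at hm
    rwa [Nat.mod_eq_of_lt h1, Nat.mod_eq_of_lt h2] at hm
  exact Units.ext (ZMod.val_injective p hv)

lemma conj_unique {x : G} {p : ℕ} [Fact p.Prime] (hx : orderOf x = p) {g : G}
    {u v : (ZMod p)ˣ} (h1 : g * x * g⁻¹ = x ^ ((u : ZMod p)).val)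
    (h2 : g * x * g⁻¹ = x ^ ((v : ZMod p)).val) : u = v :=
  pow_val_unique hx (h1.symm.trans h2)

lemma conj_mul_aux {x : G} {p : ℕ} (hx : orderOf x = p) {a b : G} {u v : (ZMod p)ˣ}
    (ha : a * x * a⁻¹ = x ^ ((u : ZMod p)).val) (hb : b * x * b⁻¹ = x ^ ((v : ZMod p)).val) :
    (a * b) * x * (a * b)⁻¹ = x ^ ((u * v : (ZMod p)ˣ) : ZMod p).val := by
  rw [pow_val_mul hx, pow_mul, ← ha, ← conj_pow_aux, ← hb]
  group

lemma conj_inv_aux {x : G} {p : ℕ} [Fact p.Prime] (hx : orderOf x = p) {a : G} {u : (ZMod p)ˣ}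
    (ha : a * x * a⁻¹ = x ^ ((u : ZMod p)).val) :
    a⁻¹ * x * (a⁻¹)⁻¹ = x ^ ((u⁻¹ : (ZMod p)ˣ) : ZMod p).val := by
  haveI : Fact (1 < p) := ⟨(‹Fact p.Prime›.out).one_lt⟩
  have key : x = a * x ^ ((u⁻¹ : (ZMod p)ˣ) : ZMod p).val * a⁻¹ := by
    have h1 : x = (x ^ ((u : ZMod p)).val) ^ ((u⁻¹ : (ZMod p)ˣ) : ZMod p).val := by
      rw [← pow_mul, ← pow_val_mul hx, mul_inv_cancel, Units.val_one, ZMod.val_one, pow_one]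
    rw [← ha, ← conj_pow_aux] at h1
    exact h1
  have h2 : a⁻¹ * x * a = x ^ ((u⁻¹ : (ZMod p)ˣ) : ZMod p).val := by
    conv_lhs => rw [key]
    group
  rw [inv_inv]
  exact h2

/-- The subgroup of `(ZMod p)ˣ` consisting of exponents `u` with `x^u` conjugate to `x`. -/
def cutK (x : G) (p : ℕ) [Fact p.Prime] (hx : orderOf x = p) : Subgroup (ZMod p)ˣ where
  carrier := {u | ∃ g : G, g * x * g⁻¹ = x ^ ((u : ZMod p)).val}
  one_mem' := by
    haveI : Fact (1 < p) := ⟨(‹Fact p.Prime›.out).one_lt⟩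
    exact ⟨1, by simp [ZMod.val_one]⟩
  mul_mem' := by
    rintro u v ⟨a, ha⟩ ⟨b, hb⟩
    exact ⟨a * b, conj_mul_aux hx ha hb⟩
  inv_mem' := by
    rintro u ⟨a, ha⟩
    exact ⟨a⁻¹, conj_inv_aux hx ha⟩

/-- The subgroup of `G` of elements conjugating `x` into a power of itself. -/
def cutN (x : G) (p : ℕ) [Fact p.Prime] (hx : orderOf x = p) : Subgroup G where
  carrier := {g | ∃ u : (ZMod p)ˣ, g * x * g⁻¹ = x ^ ((u : ZMod p)).val}
  one_mem' := by
    haveI : Fact (1 < p) := ⟨(‹Fact p.Prime›.out).one_lt⟩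
    exact ⟨1, by simp [ZMod.val_one]⟩
  mul_mem' := by
    rintro a b ⟨u, ha⟩ ⟨v, hb⟩
    exact ⟨u * v, conj_mul_aux hx ha hb⟩
  inv_mem' := by
    rintro a ⟨u, ha⟩
    exact ⟨u⁻¹, conj_inv_aux hx ha⟩

noncomputable def cutPhiFun (x : G) (p : ℕ) [Fact p.Prime] (hx : orderOf x = p)
    (g : cutN x p hx) : (ZMod p)ˣ :=
  Classical.choose g.2

lemma cutPhiFun_spec (x : G) (p : ℕ) [Fact p.Prime] (hx : orderOf x = p) (g : cutN x p hx) :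
    (g : G) * x * (g : G)⁻¹ = x ^ ((cutPhiFun x p hx g : ZMod p)).val :=
  Classical.choose_spec g.2

noncomputable def cutPhi (x : G) (p : ℕ) [Fact p.Prime] (hx : orderOf x = p) :
    cutN x p hx →* (ZMod p)ˣ :=
  MonoidHom.mk' (cutPhiFun x p hx) (by
    intro a b
    apply conj_unique hx (g := ((a * b : cutN x p hx) : G))
    · exact cutPhiFun_spec x p hx (a * b)
    · exact conj_mul_aux hx (cutPhiFun_spec x p hx a) (cutPhiFun_spec x p hx b))

lemma cutPhi_range (x : G) (p : ℕ) [Fact p.Prime] (hx : orderOf x = p) :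
    (cutPhi x p hx).range = cutK x p hx := by
  ext u
  constructor
  · rintro ⟨g, rfl⟩
    exact ⟨g, cutPhiFun_spec x p hx g⟩
  · rintro ⟨g, hg⟩
    have hgN : g ∈ cutN x p hx := ⟨u, hg⟩
    refine ⟨⟨g, hgN⟩, ?_⟩
    exact conj_unique hx (cutPhiFun_spec x p hx ⟨g, hgN⟩) hg

lemma cutK_card_dvd (x : G) (p : ℕ) [Fact p.Prime] (hx : orderOf x = p) [Finite G] :
    Nat.card (cutK x p hx) ∣ Nat.card G := by
  rw [← cutPhi_range x p hx]
  have h1 : Nat.card (cutPhi x p hx).range = Nat.card (cutN x p hx ⧸ (cutPhi x p hx).ker) :=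
    (Nat.card_congr (QuotientGroup.quotientKerEquivRange (cutPhi x p hx)).toEquiv).symm
  rw [h1]
  exact (Subgroup.card_quotient_dvd_card _).trans (Subgroup.card_subgroup_dvd_card _)

lemma cutK_cover {x : G} {p : ℕ} [Fact p.Prime] (hx : orderOf x = p)
    (hsr : IsInvSemiRational x) (u : (ZMod p)ˣ) :
    u ∈ cutK x p hx ∨ -u ∈ cutK x p hx := by
  have hc : Nat.Coprime ((u : ZMod p)).val p := ZMod.val_coe_unit_coprime u
  have hcop : IsCoprime (((u : ZMod p)).val : ℤ) (orderOf x : ℤ) := by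
    rw [hx]; exact hc.isCoprime
  have hpow : x ^ ((((u : ZMod p)).val : ℕ) : ℤ) = x ^ ((u : ZMod p)).val := zpow_natCast _ _
  rcases hsr _ hcop with hconj | hconj
  · left
    rw [hpow] at hconj
    obtain ⟨c, hc2⟩ := isConj_iff.mp hconj
    exact ⟨c, hc2⟩
  · right
    rw [hpow] at hconj
    obtain ⟨c, hc2⟩ := isConj_iff.mp hconj
    refine ⟨c, ?_⟩
    have hne : (u : ZMod p) ≠ 0 := u.ne_zero
    have hval : ((-u : (ZMod p)ˣ) : ZMod p).val = p - ((u : ZMod p)).val := by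
      rw [Units.val_neg, ZMod.neg_val, if_neg hne]
    have hvlt : ((u : ZMod p)).val < p := ZMod.val_lt _
    have hinv : x ^ (p - ((u : ZMod p)).val) = (x ^ ((u : ZMod p)).val)⁻¹ := by
      apply eq_inv_of_mul_eq_one_left
      rw [← pow_add, Nat.sub_add_cancel hvlt.le, ← hx, pow_orderOf_eq_one]
    rw [hval, hinv, ← hc2]
    group

end Aux

theorem cut_nontrivial_two_or_three_dvd_order (G : Type) [Group G] [Finite G] [Nontrivial G]
    (h : IsCutGroup G) : 2 ∣ Nat.card G ∨ 3 ∣ Nat.card G := by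
  by_contra hcon
  push_neg at hcon
  obtain ⟨h2, h3⟩ := hcon
  set n := Nat.card G with hn
  have hn1 : 1 < n := Finite.one_lt_card_iff_nontrivial.mpr ‹Nontrivial G›
  set p := n.minFac with hpdef
  have hp : p.Prime := Nat.minFac_prime (by omega)
  have hpn : p ∣ n := Nat.minFac_dvd n
  have hp2 : p ≠ 2 := fun hh => h2 (hh ▸ hpn)
  have hp3 : p ≠ 3 := fun hh => h3 (hh ▸ hpn)
  have hp4 : p ≠ 4 := fun hh => by rw [hh] at hp; norm_num at hp
  have hp5 : 5 ≤ p := by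
    have := hp.two_le
    omega
  haveI : Fact p.Prime := ⟨hp⟩
  haveI := Fintype.ofFinite G
  have hpn' : p ∣ Fintype.card G := by rwa [← Nat.card_eq_fintype_card]
  obtain ⟨x, hx⟩ := exists_prime_orderOf_dvd_card p hpn'
  set K := cutK x p hx with hK
  have hcover : (Set.univ : Set (ZMod p)ˣ) ⊆ ↑K ∪ (fun u => -u) '' ↑K := by
    intro u _
    rcases cutK_cover hx (h x) u with hu | hu
    · exact Or.inl hu
    · exact Or.inr ⟨-u, hu, by simp⟩
  have hcards : p - 1 ≤ 2 * Nat.card K := by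
    have hfin : (↑K ∪ (fun u : (ZMod p)ˣ => -u) '' ↑K : Set (ZMod p)ˣ).Finite :=
      Set.toFinite _
    have h0 : Nat.card (ZMod p)ˣ = (Set.univ : Set (ZMod p)ˣ).ncard := (Set.ncard_univ _).symm
    have h1 : (Set.univ : Set (ZMod p)ˣ).ncard ≤
        (↑K ∪ (fun u : (ZMod p)ˣ => -u) '' ↑K : Set (ZMod p)ˣ).ncard :=
      Set.ncard_le_ncard hcover hfin
    have h2' : (↑K ∪ (fun u : (ZMod p)ˣ => -u) '' ↑K : Set (ZMod p)ˣ).ncard ≤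
        (↑K : Set (ZMod p)ˣ).ncard + ((fun u : (ZMod p)ˣ => -u) '' (↑K : Set (ZMod p)ˣ)).ncard :=
      Set.ncard_union_le _ _
    have h3' : ((fun u : (ZMod p)ˣ => -u) '' (↑K : Set (ZMod p)ˣ)).ncard =
        (↑K : Set (ZMod p)ˣ).ncard :=
      Set.ncard_image_of_injective _ neg_injective
    have h4 : (↑K : Set (ZMod p)ˣ).ncard = Nat.card K := Nat.card_coe_set_eq _
    have h5 : Nat.card (ZMod p)ˣ = p - 1 := by
      rw [Nat.card_eq_fintype_card, ZMod.card_units]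
    omega
  have hKdvdG : Nat.card K ∣ n := cutK_card_dvd x p hx
  have hKdvdU : Nat.card K ∣ p - 1 := by
    have hd := Subgroup.card_subgroup_dvd_card K
    have h5 : Nat.card (ZMod p)ˣ = p - 1 := by
      rw [Nat.card_eq_fintype_card, ZMod.card_units]
    rwa [h5] at hd
  set m := Nat.card K with hm
  have hm2 : 2 ≤ m := by omega
  set q := m.minFac with hq
  have hqp : q.Prime := Nat.minFac_prime (by omega)
  have hqm : q ∣ m := Nat.minFac_dvd m
  have hqn : q ∣ n := hqm.trans hKdvdG
  have hple : p ≤ q := Nat.minFac_le_of_dvd hqp.two_le hqn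
  have hqle : q ≤ p - 1 := Nat.le_of_dvd (by omega) (hqm.trans hKdvdU)
  omega
end

section
/- Let G be a finite group and let x ∈ G be an element whose order is a power of 3. Then x is inverse semi-rational in G if and only if there exists a Sylow 3-subgroup P of G with x ∈ P such that x is inverse semi-rational in P. -/
open Subgroup

theorem ZMod.exists_eq_pow_or_eq_neg_pow_of_orderOf_eq {n : ℕ} {u : (ZMod (3 ^ (n + 1)))ˣ}
    (hu : orderOf u = 3 ^ n) (v : (ZMod (3 ^ (n + 1)))ˣ) : ∃ t : ℕ, v = u ^ t ∨ v = -u ^ t := by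
  have : Fact (1 < 3 ^ (n + 1)) := ⟨Nat.one_lt_pow n.succ_ne_zero (by norm_num)⟩
  have hneg : orderOf (-1 : (ZMod (3 ^ (n + 1)))ˣ) = 2 := by
    rw [← orderOf_units, Units.val_neg, Units.val_one, orderOf_neg_one, ZMod.ringChar_zmod_n,
      if_neg]
    exact fun h => absurd (h ▸ dvd_pow_self 3 n.succ_ne_zero) (by norm_num)
  have hcop : (orderOf (-1 : (ZMod (3 ^ (n + 1)))ˣ)).Coprime (orderOf u) := by
    rw [hneg, hu]
    exact Nat.Coprime.pow_right n (by norm_num)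
  have hgen : orderOf (-u) = Nat.card (ZMod (3 ^ (n + 1)))ˣ := by
    rw [neg_eq_neg_one_mul, (Commute.all _ _).orderOf_mul_eq_mul_orderOf_of_coprime hcop, hneg, hu,
      Nat.card_eq_fintype_card, ZMod.card_units_eq_totient,
      Nat.totient_prime_pow_succ Nat.prime_three, mul_comm]
  have htop : zpowers (-u) = ⊤ := eq_top_of_card_eq _ (by rw [Nat.card_zpowers, hgen])
  obtain ⟨t, ht⟩ := mem_powers_iff_mem_zpowers.mpr (htop ▸ mem_top v)
  refine ⟨t, ?_⟩
  rcases neg_one_pow_eq_or (ZMod (3 ^ (n + 1)))ˣ t with h | h <;> simp [← ht, neg_pow, h]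

theorem Int.exists_modEq_pow_or_modEq_neg_pow {n : ℕ} {a k : ℤ}
    (ha : orderOf (a : ZMod (3 ^ (n + 1))) = 3 ^ n) (hk : IsCoprime k 3) :
    ∃ t : ℕ, k ≡ a ^ t [ZMOD 3 ^ (n + 1)] ∨ k ≡ -a ^ t [ZMOD 3 ^ (n + 1)] := by
  have hfin : IsOfFinOrder (a : ZMod (3 ^ (n + 1))) := orderOf_pos_iff.mp (ha ▸ by positivity)
  have hk' : IsCoprime k ((3 ^ (n + 1) : ℕ) : ℤ) := by push_cast; exact hk.pow_right
  obtain ⟨t, ht⟩ := ZMod.exists_eq_pow_or_eq_neg_pow_of_orderOf_eq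
    (u := hfin.unit) (by rwa [← orderOf_units]) (ZMod.unitOfIsCoprime k hk')
  refine ⟨t, ?_⟩
  simp only [Units.ext_iff, Units.val_pow_eq_pow_val, Units.val_neg, ZMod.coe_unitOfIsCoprime,
    IsOfFinOrder.val_unit] at ht
  have h3 : ((3 : ℤ) ^ (n + 1)) = ((3 ^ (n + 1) : ℕ) : ℤ) := by push_cast; rfl
  simpa only [h3, ← ZMod.intCast_eq_intCast_iff, Int.cast_pow, Int.cast_neg] using ht

theorem ZMod.orderOf_sixteen_pow {n w : ℕ} (hw : Nat.Coprime 3 w) :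
    orderOf ((16 ^ w : ℤ) : ZMod (3 ^ (n + 1))) = 3 ^ n := by
  have h16 := ZMod.orderOf_one_add_mul_prime Nat.prime_three (by norm_num) 5 (by norm_num) n
  norm_num at h16
  push_cast
  rw [Nat.Coprime.orderOf_pow (h16 ▸ hw.pow_left n), h16]

theorem Int.exists_modEq_sixteen_pow_pow_or_modEq_neg {w : ℕ} (hw : Nat.Coprime 3 w) (n : ℕ)
    {k : ℤ} (hk : IsCoprime k (3 ^ n)) :
    ∃ t : ℕ, k ≡ (16 ^ w) ^ t [ZMOD 3 ^ n] ∨ k ≡ -(16 ^ w) ^ t [ZMOD 3 ^ n] := by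
  cases n with
  | zero => exact ⟨0, Or.inl (by simp [Int.modEq_one])⟩
  | succ n =>
    exact Int.exists_modEq_pow_or_modEq_neg_pow (ZMod.orderOf_sixteen_pow hw)
      ((IsCoprime.pow_right_iff n.succ_pos).mp hk)

section Conjugation

variable {G : Type*} [Group G]

theorem conj_pow_eq_zpow_pow {g x : G} {a : ℤ} (h : g * x * g⁻¹ = x ^ a) (t : ℕ) :
    g ^ t * x * (g ^ t)⁻¹ = x ^ (a ^ t) := by
  induction t with
  | zero => simp
  | succ t ih =>
    calc g ^ (t + 1) * x * (g ^ (t + 1))⁻¹ = g * (g ^ t * x * (g ^ t)⁻¹) * g⁻¹ := by group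
      _ = (g * x * g⁻¹) ^ (a ^ t) := by rw [ih, conj_zpow]
      _ = x ^ (a ^ (t + 1)) := by rw [h, ← zpow_mul, pow_succ']

theorem exists_conj_eq_zpow_sq {x : G} {k : ℤ} (h : IsConj x (x ^ k) ∨ IsConj x⁻¹ (x ^ k)) :
    ∃ c : G, c * x * c⁻¹ = x ^ (k ^ 2) := by
  rcases h with h | h <;> obtain ⟨c, hc⟩ := isConj_iff.mp h
  · exact ⟨c ^ 2, conj_pow_eq_zpow_pow hc 2⟩
  · have hc' : c * x * c⁻¹ = x ^ (-k) := by rw [zpow_neg, ← hc, conj_inv, inv_inv]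
    exact ⟨c ^ 2, by rw [conj_pow_eq_zpow_pow hc' 2, neg_sq]⟩

theorem isInvSemiRational_of_conj_eq_zpow {g x : G} {a : ℤ} (hg : g * x * g⁻¹ = x ^ a)
    (ha : ∀ k : ℤ, IsCoprime k (orderOf x) →
      ∃ t : ℕ, k ≡ a ^ t [ZMOD orderOf x] ∨ k ≡ -a ^ t [ZMOD orderOf x]) :
    IsInvSemiRational x := by
  intro k hk
  obtain ⟨t, ht | ht⟩ := ha k hk
  · exact Or.inl (isConj_iff.mpr ⟨g ^ t, by
      rw [conj_pow_eq_zpow_pow hg, zpow_eq_zpow_iff_modEq.mpr ht.symm]⟩)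
  · exact Or.inr (isConj_iff.mpr ⟨g ^ t, by
      rw [← conj_inv, conj_pow_eq_zpow_pow hg, ← zpow_neg, zpow_eq_zpow_iff_modEq.mpr ht.symm]⟩)

theorem IsInvSemiRational.map {H : Type*} [Group H] {x : G} (hx : IsInvSemiRational x)
    (f : G →* H) (hf : Function.Injective f) : IsInvSemiRational (f x) := by
  intro k hk
  rw [orderOf_injective f hf] at hk
  simpa only [map_inv, map_zpow] using (hx k hk).imp f.map_isConj f.map_isConj

theorem mem_normalizer_zpowers_of_conj_eq_zpow [Finite G] {g x : G} {a : ℤ}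
    (h : g * x * g⁻¹ = x ^ a) : g ∈ normalizer (zpowers x : Set G) := by
  refine mem_normalizer_fintype fun y hy => ?_
  obtain ⟨i, rfl⟩ := mem_zpowers_iff.mp hy
  rw [← conj_zpow, h, ← zpow_mul]
  exact zpow_mem_zpowers x _

theorem exists_coprime_isPGroup_zpowers_pow [Finite G] {p : ℕ} (hp : p.Prime) (g : G) :
    ∃ w : ℕ, p.Coprime w ∧ IsPGroup p (zpowers (g ^ w)) := by
  have hg : orderOf g ≠ 0 := (orderOf_pos g).ne'
  refine ⟨ordCompl[p] (orderOf g), Nat.coprime_ordCompl hp hg,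
    IsPGroup.of_card (n := (orderOf g).factorization p) ?_⟩
  rw [Nat.card_zpowers, orderOf_pow_orderOf_div hg (Nat.ordProj_dvd _ _)]

theorem Sylow.exists_mem_and_mem_of_mem_normalizer [Finite G] {p : ℕ} [Fact p.Prime] {x h : G}
    (hx : IsPGroup p (zpowers x)) (hh : IsPGroup p (zpowers h))
    (hn : h ∈ normalizer (zpowers x : Set G)) : ∃ P : Sylow p G, x ∈ P ∧ h ∈ P := by
  obtain ⟨P, hP⟩ := (hh.to_sup_of_normal_right' hx (zpowers_le.mpr hn)).exists_le_sylow
  exact ⟨P, hP (mem_sup_right (mem_zpowers x)), hP (mem_sup_left (mem_zpowers h))⟩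

end Conjugation

theorem three_element_isr_iff_isr_in_sylow (G : Type) [Group G] [Finite G] (x : G)
    (hx : ∃ n : ℕ, orderOf x = 3 ^ n) :
    IsInvSemiRational x ↔
      ∃ (P : Sylow 3 G) (hxP : x ∈ P),
        IsInvSemiRational (⟨x, hxP⟩ : (P : Subgroup G)) := by
  obtain ⟨n, hn⟩ := hx
  refine ⟨fun hisr => ?_, fun ⟨P, hxP, hP⟩ => hP.map P.1.subtype P.1.subtype_injective⟩
  have h4 : IsCoprime (4 : ℤ) (orderOf x) := by
    rw [hn]; push_cast; exact IsCoprime.pow_right (by norm_num)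
  obtain ⟨c, hc⟩ := exists_conj_eq_zpow_sq (hisr 4 h4)
  obtain ⟨w, hw, hcw⟩ := exists_coprime_isPGroup_zpowers_pow Nat.prime_three c
  have hconj : c ^ w * x * (c ^ w)⁻¹ = x ^ ((16 : ℤ) ^ w) := conj_pow_eq_zpow_pow hc w
  obtain ⟨P, hxP, hcP⟩ := Sylow.exists_mem_and_mem_of_mem_normalizer
    (IsPGroup.of_card ((Nat.card_zpowers x).trans hn)) hcw
    (mem_normalizer_zpowers_of_conj_eq_zpow hconj)
  refine ⟨P, hxP, isInvSemiRational_of_conj_eq_zpow (g := ⟨c ^ w, hcP⟩) (Subtype.ext hconj) ?_⟩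
  rw [Subgroup.orderOf_mk, hn]
  push_cast
  exact fun k hk => Int.exists_modEq_sixteen_pow_pow_or_modEq_neg hw n hk
end
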